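/- Let g be a finite-dimensional ℤ-graded Lie algebra over a field k, with grading g = ⊕_{j∈ℤ} g(j), let e ∈ g(2), and assume ad e : g(j) → g(j+2) is surjective for all j ≥ -1 (a good grading). If additionally g^e ⊆ ⊕_{j ≥ -1} g(j), then dim g^e = dim g(-1) + dim g(0). -/
import Mathlib


/-- for a finite-dimensional ℤ-graded Lie algebra `g` and
`e ∈ g 2` with `ad e : g j → g (j+2)` surjective for all `j ≥ -1`, if moreover
`g^e ⊆ ⊕_{j ≥ -1} g j`, then `dim g^e = dim g(-1) + dim g(0)`. -/
theorem dim_centralizer_good_grading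
    (k : Type*) [Field k] (L : Type*) [LieRing L] [LieAlgebra k L]
    [FiniteDimensional k L]
    (g : ℤ → Submodule k L) (hg : DirectSum.IsInternal g)
    (hbracket : ∀ i j : ℤ, ∀ x ∈ g i, ∀ y ∈ g j, ⁅x, y⁆ ∈ g (i + j))
    (e : L) (he : e ∈ g 2)
    (hsurj : ∀ j : ℤ, -1 ≤ j → ∀ y ∈ g (j + 2), ∃ x ∈ g j, ⁅e, x⁆ = y)
    (hge : LinearMap.ker (LieAlgebra.ad k L e : L →ₗ[k] L) ≤ ⨆ j ∈ Set.Ici (-1 : ℤ), g j) :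
    Module.finrank k (LinearMap.ker (LieAlgebra.ad k L e : L →ₗ[k] L)) =
      Module.finrank k (g (-1)) + Module.finrank k (g 0) := by
  classical
  set A : L →ₗ[k] L := (LieAlgebra.ad k L e : L →ₗ[k] L) with hA
  set N : Submodule k L := ⨆ j ∈ Set.Ici (-1 : ℤ), g j with hN
  set P : Submodule k L := ⨆ j ∈ Set.Ici (1 : ℤ), g j with hP
  -- map A N = P
  have hmap : Submodule.map A N = P := by
    apply le_antisymm
    · rw [Submodule.map_le_iff_le_comap, hN]
      refine iSup₂_le fun j hj => fun x hx => ?_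
      have : A x ∈ g (2 + j) := by
        simpa [hA, LieAlgebra.ad_apply] using hbracket 2 j e he x hx
      have h2j : (2 + j) ∈ Set.Ici (1 : ℤ) := by simp at hj ⊢; omega
      exact Submodule.mem_comap.mpr (le_iSup₂ (f := fun j _ => g j) (2 + j) h2j this)
    · rw [hP]
      refine iSup₂_le fun j hj => fun y hy => ?_
      have hj' : (-1 : ℤ) ≤ j - 2 := by simp at hj; omega
      obtain ⟨x, hx, hxe⟩ := hsurj (j - 2) hj' y (by simpa using hy)
      refine ⟨x, ?_, by simpa [hA, LieAlgebra.ad_apply] using hxe⟩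
      exact le_iSup₂ (f := fun j _ => g j) (j - 2) hj' hx
  -- rank-nullity for A restricted to N
  have hrn : Module.finrank k N =
      Module.finrank k P + Module.finrank k (LinearMap.ker A) := by
    have h1 := LinearMap.finrank_range_add_finrank_ker (A.domRestrict N)
    rw [LinearMap.range_domRestrict, hmap] at h1
    have hker : Module.finrank k (LinearMap.ker (A.domRestrict N)) =
        Module.finrank k (LinearMap.ker A) := by
      have : Submodule.map N.subtype ((LinearMap.ker A).comap N.subtype) =
          LinearMap.ker A := by
        rw [Submodule.map_comap_subtype]
        exact inf_eq_right.mpr hge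
      rw [LinearMap.ker_domRestrict, ← Submodule.finrank_map_subtype_eq N, this]
    rw [hker] at h1
    omega
  -- independence
  have hind : iSupIndep g := hg.submodule_iSupIndep
  have hd0 : Disjoint (g 0) P := by
    refine (iSupIndep_def.mp hind 0).mono_right ?_
    refine iSup₂_le fun j hj => ?_
    have : j ≠ 0 := by simp at hj; omega
    exact le_iSup₂ (f := fun j (_ : j ≠ 0) => g j) j this
  have hd1 : Disjoint (g (-1)) (g 0 ⊔ P) := by
    refine (iSupIndep_def.mp hind (-1)).mono_right ?_
    refine sup_le ?_ ?_
    · exact le_iSup₂ (f := fun j (_ : j ≠ -1) => g j) 0 (by norm_num)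
    · refine iSup₂_le fun j hj => ?_
      have : j ≠ -1 := by simp at hj; omega
      exact le_iSup₂ (f := fun j (_ : j ≠ -1) => g j) j this
  -- splitting of N
  have hset : Set.Ici (-1 : ℤ) = insert (-1) (insert 0 (Set.Ici 1)) := by
    ext j; simp; omega
  have hsplit : N = g (-1) ⊔ (g 0 ⊔ P) := by
    rw [hN, hset, iSup_insert, iSup_insert]
  -- finrank computations for sums
  have hs0 : Module.finrank k (g 0 ⊔ P : Submodule k L) =
      Module.finrank k (g 0) + Module.finrank k P := by
    have := Submodule.finrank_sup_add_finrank_inf_eq (g 0) P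
    rw [hd0.eq_bot, finrank_bot] at this
    omega
  have hs1 : Module.finrank k N =
      Module.finrank k (g (-1)) + (Module.finrank k (g 0) + Module.finrank k P) := by
    have := Submodule.finrank_sup_add_finrank_inf_eq (g (-1)) (g 0 ⊔ P)
    rw [hd1.eq_bot, finrank_bot] at this
    rw [hsplit, ← hs0]
    omega
  omega
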